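/- Let ℏ, m, g > 0 and let α, β, γ, δ ∈ ℝ satisfy αδ − βγ = −1. Let ψ⁽¹⁾ : ℝ × ℝ → ℂ and ψ⁽²⁾ : ℝ × [0,∞) × ℝ → ℂ be smooth (ψ⁽²⁾ smooth up to the boundary y = 0), with last argument the time t. Suppose that for all x and t the Robin-type interior–boundary condition (α + β ∂_y) ψ⁽²⁾(x,0,t) = (2mg/ℏ²) ψ⁽¹⁾(x,t) holds, and that the Schrödinger equations iℏ ∂_t ψ⁽¹⁾(x,t) = −(ℏ²/2m) ∂²ₓ ψ⁽¹⁾(x,t) + g (γ + δ ∂_y) ψ⁽²⁾(x,0,t) and iℏ ∂_t ψ⁽²⁾(x,y,t) = −(ℏ²/2m)(∂²ₓ + ∂²_y) ψ⁽²⁾(x,y,t) hold for all x, all y > 0 and all t. Then for all x and t: ∂_t |ψ⁽¹⁾(x,t)|² = −∂ₓ j⁽¹⁾(x,t) − j_y⁽²⁾(x,0,t), where j⁽¹⁾ = (ℏ/m) Im[ψ⁽¹⁾* ∂ₓ ψ⁽¹⁾] and j_y⁽²⁾ = (ℏ/m) Im[ψ⁽²⁾* ∂_y ψ⁽²⁾].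 -/

import Mathlib

open Complex

/-- **Probability balance for the toy IBC model (Robin-type IBC).**
Configuration space: `Q¹ = ℝ` and the half plane `Q² = {(x,y) : y ≥ 0}`; `ψ2` is smooth
up to the boundary `y = 0`, formalized as a smooth function on all of `ℝ × ℝ × ℝ`
(last argument is time). -/
lemma key_alg (ℏ m g α β γ δ : ℝ) (hℏ : ℏ ≠ 0) (hm : m ≠ 0) (hg : g ≠ 0)
    (hdet : α * δ - β * γ = -1) (a c D B B' : ℂ)
    (hS : Complex.I * (ℏ : ℂ) * c
        = -((ℏ : ℂ) ^ 2 / (2 * (m : ℂ))) * D + (g : ℂ) * ((γ : ℂ) * B + (δ : ℂ) * B'))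
    (hI : (α : ℂ) * B + (β : ℂ) * B' = ((2 * m * g / ℏ ^ 2 : ℝ) : ℂ) * a) :
    2 * ((starRingEnd ℂ) a * c).re
      = -((ℏ / m) * (((starRingEnd ℂ) a * D).im)) - (ℏ / m) * (((starRingEnd ℂ) B * B').im) := by
  have hcast : -((ℏ : ℂ) ^ 2 / (2 * (m : ℂ))) = ((-(ℏ ^ 2 / (2 * m)) : ℝ) : ℂ) := by push_cast; ring
  rw [hcast] at hS
  have hS1 := congrArg Complex.re hS
  have hS2 := congrArg Complex.im hS
  have hI1 := congrArg Complex.re hI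
  have hI2 := congrArg Complex.im hI
  simp only [Complex.mul_re, Complex.mul_im, Complex.add_re, Complex.add_im,
    Complex.ofReal_re, Complex.ofReal_im, Complex.I_re, Complex.I_im,
    Complex.conj_re, Complex.conj_im] at hS1 hS2 hI1 hI2 ⊢
  field_simp at hS1 hS2 hI1 hI2
  have H : 2 * m * ℏ * (a.re * c.re + a.im * c.im)
      = -(ℏ ^ 2) * (a.re * D.im - a.im * D.re) - ℏ ^ 2 * (B.re * B'.im - B.im * B'.re) := by
    linear_combination a.re * hS2 - a.im * hS1 - (γ * B.im + δ * B'.im) * hI1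
      + (γ * B.re + δ * B'.re) * hI2 + ℏ ^ 2 * (B.re * B'.im - B.im * B'.re) * hdet
  field_simp
  refine mul_left_cancel₀ hℏ ?_
  linear_combination H

theorem probability_balance_robin_IBC
    (ℏ m g : ℝ) (hℏ : 0 < ℏ) (hm : 0 < m) (hg : 0 < g)
    (α β γ δ : ℝ) (hdet : α * δ - β * γ = -1)
    (ψ1 : ℝ → ℝ → ℂ) (ψ2 : ℝ → ℝ → ℝ → ℂ)
    (hψ1 : ContDiff ℝ (⊤ : ℕ∞) (fun p : ℝ × ℝ => ψ1 p.1 p.2))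
    (hψ2 : ContDiff ℝ (⊤ : ℕ∞) (fun p : ℝ × ℝ × ℝ => ψ2 p.1 p.2.1 p.2.2))
    -- Robin-type interior–boundary condition: (α + β ∂_y) ψ²(x,0,t) = (2mg/ℏ²) ψ¹(x,t)
    (hIBC : ∀ x t : ℝ,
      (α : ℂ) * ψ2 x 0 t + (β : ℂ) * deriv (fun v => ψ2 x v t) 0
        = (2 * m * g / ℏ ^ 2 : ℝ) * ψ1 x t)
    -- Schrödinger equation on the first sector:
    -- iℏ ∂_t ψ¹ = −(ℏ²/2m) ∂²ₓ ψ¹ + g (γ + δ ∂_y) ψ²(x,0,t)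
    (hSch1 : ∀ x t : ℝ,
      Complex.I * (ℏ : ℂ) * deriv (fun s => ψ1 x s) t
        = -((ℏ : ℂ) ^ 2 / (2 * (m : ℂ))) * deriv (deriv (fun u => ψ1 u t)) x
          + (g : ℂ) * ((γ : ℂ) * ψ2 x 0 t + (δ : ℂ) * deriv (fun v => ψ2 x v t) 0))
    -- Schrödinger equation on the second sector, for y > 0:
    (hSch2 : ∀ x y t : ℝ, 0 < y →
      Complex.I * (ℏ : ℂ) * deriv (fun s => ψ2 x y s) t
        = -((ℏ : ℂ) ^ 2 / (2 * (m : ℂ)))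
            * (deriv (deriv (fun u => ψ2 u y t)) x
               + deriv (deriv (fun v => ψ2 x v t)) y)) :
    -- conclusion: ∂_t |ψ¹|² = −∂ₓ j¹ − j_y²(x,0,t)
    ∀ x t : ℝ,
      deriv (fun s => ‖ψ1 x s‖ ^ 2) t
        = - deriv (fun u =>
              (ℏ / m) * ((starRingEnd ℂ) (ψ1 u t) * deriv (fun w => ψ1 w t) u).im) x
          - (ℏ / m) * ((starRingEnd ℂ) (ψ2 x 0 t) * deriv (fun v => ψ2 x v t) 0).im := by
  intro x t
  -- smoothness of the two partial functions
  have hg1 : ContDiff ℝ (⊤ : ℕ∞) (fun u => ψ1 u t) := hψ1.comp (contDiff_id.prodMk contDiff_const)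
  have hft : ContDiff ℝ (⊤ : ℕ∞) (fun s => ψ1 x s) := hψ1.comp (contDiff_const.prodMk contDiff_id)
  have hd1 : Differentiable ℝ (deriv (fun u => ψ1 u t)) := by
    have h2 := (contDiff_infty_iff_deriv.mp (hg1.of_le (by simp))).2
    exact h2.differentiable (by simp)
  -- basic derivatives
  have hc : HasDerivAt (fun s => ψ1 x s) (deriv (fun s => ψ1 x s) t) t :=
    ((hft.differentiable (by simp)) t).hasDerivAt
  have he : HasDerivAt (fun u => ψ1 u t) (deriv (fun u => ψ1 u t) x) x :=
    ((hg1.differentiable (by simp)) x).hasDerivAt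
  have hD : HasDerivAt (deriv (fun u => ψ1 u t)) (deriv (deriv (fun u => ψ1 u t)) x) x :=
    (hd1 x).hasDerivAt
  set a : ℂ := ψ1 x t with ha
  set c : ℂ := deriv (fun s => ψ1 x s) t with hcdef
  set e : ℂ := deriv (fun u => ψ1 u t) x with hedef
  set D : ℂ := deriv (deriv (fun u => ψ1 u t)) x with hDdef
  set B : ℂ := ψ2 x 0 t with hBdef
  set B' : ℂ := deriv (fun v => ψ2 x v t) 0 with hB'def
  -- time derivative of |ψ1|²
  have hre : HasDerivAt (fun s => (ψ1 x s).re) c.re t := by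
    exact Complex.reCLM.hasFDerivAt.comp_hasDerivAt t hc
  have him : HasDerivAt (fun s => (ψ1 x s).im) c.im t := by
    exact Complex.imCLM.hasFDerivAt.comp_hasDerivAt t hc
  have hLHS : deriv (fun s => ‖ψ1 x s‖ ^ 2) t = 2 * ((starRingEnd ℂ) a * c).re := by
    have hsq : HasDerivAt (fun s => (ψ1 x s).re * (ψ1 x s).re + (ψ1 x s).im * (ψ1 x s).im)
        ((c.re * a.re + a.re * c.re) + (c.im * a.im + a.im * c.im)) t :=
      (hre.mul hre).add (him.mul him)
    have hfun : (fun s => ‖ψ1 x s‖ ^ 2)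
        = fun s => (ψ1 x s).re * (ψ1 x s).re + (ψ1 x s).im * (ψ1 x s).im := by
      funext s
      simp [Complex.sq_norm, Complex.normSq_apply]
    rw [hfun, hsq.deriv]
    simp only [Complex.mul_re, Complex.conj_re, Complex.conj_im]
    ring
  -- x-derivative of the current
  have hconj : HasDerivAt (fun u => (starRingEnd ℂ) (ψ1 u t)) ((starRingEnd ℂ) e) x := by
    simpa using he.star
  have hprod : HasDerivAt (fun u => (starRingEnd ℂ) (ψ1 u t) * deriv (fun w => ψ1 w t) u)
      ((starRingEnd ℂ) e * e + (starRingEnd ℂ) a * D) x := hconj.mul hD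
  have himx : HasDerivAt (fun u => ((starRingEnd ℂ) (ψ1 u t) * deriv (fun w => ψ1 w t) u).im)
      (((starRingEnd ℂ) e * e + (starRingEnd ℂ) a * D).im) x := by
    simpa only [Function.comp_def, Complex.imCLM_apply]
      using Complex.imCLM.hasFDerivAt.comp_hasDerivAt x hprod
  have hcur : HasDerivAt (fun u =>
        (ℏ / m) * ((starRingEnd ℂ) (ψ1 u t) * deriv (fun w => ψ1 w t) u).im)
      ((ℏ / m) * (((starRingEnd ℂ) e * e + (starRingEnd ℂ) a * D).im)) x :=
    himx.const_mul _
  have hee : ((starRingEnd ℂ) e * e).im = 0 := by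
    simp [Complex.mul_im, Complex.conj_re, Complex.conj_im]
    ring
  have hRHS : deriv (fun u =>
        (ℏ / m) * ((starRingEnd ℂ) (ψ1 u t) * deriv (fun w => ψ1 w t) u).im) x
      = (ℏ / m) * (((starRingEnd ℂ) a * D).im) := by
    rw [hcur.deriv, Complex.add_im, hee, zero_add]
  rw [hLHS, hRHS]
  exact key_alg ℏ m g α β γ δ hℏ.ne' hm.ne' hg.ne' hdet a c D B B'
    (hSch1 x t) (hIBC x t)
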